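/- arXiv:1810.07858 — 5 statements merged into one kernel-verified Lean document; each statement's English description precedes it below -/
import Mathlib

section
/- Under the assumptions that (1) the effect of the unobserved confounder U on the potential outcome Y(d^L) is time-invariant, i.e. E[Y_{t+1}(d^L) | U_{t+1}=u_1, X_{t+1}=x, C=c] - E[Y_{t+1}(d^L) | U_{t+1}=u_0, X_{t+1}=x, C=c] = E[Y_t(d^L) | U_t=u_1, X_t=x, C=c] - E[Y_t(d^L) | U_t=u_0, X_t=x, C=c] for all u_1, u_0, x, c, and (2) the imbalance of U is time-invariant, i.e. the difference between the conditional CDFs of U_{t+1} given D=d^H versus D=d^L (conditional on X_{t+1}=x, C=c) equals the difference between the conditional CDFs of U_t given D=d^H versus D=d^L (conditional on X_t=x, C=c), and (3) Y_{t+1}(d^L) ⊥ D | (U_{t+1}, X_{t+1}, C) and Y_t(d^L) ⊥ D | (U_t, X_t, C), then for all x, c: E[Y_{t+1}(d^L) | D=d^H, X_{t+1}=x, C=c] - E[Y_{t+1}(d^L) | D=d^L, X_{t+1}=x, C=c] = E[Y_t(d^L) | D=d^H, X_t=x, C=c] - E[Y_t(d^L) | D=d^L, X_t=x, C=c]. 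-/
/-!
By (1) the two confounder-specific regressions differ by a constant, which cancels from a
difference of means over two probability measures; so the selection bias at `t+1` is the
difference of the means of the time-`t` regression `g0` under the two arms' laws of `U_{t+1}`.
By (2) these laws satisfy `μ₁ᴴ + μ₀ᴸ = μ₀ᴴ + μ₁ᴸ` (equal CDFs of finite measures on `ℝ`),
which transfers that difference to time `t`. (3) identifies each arm's mean outcome with the
mean of the regression under the arm's law of `U`.
-/

open MeasureTheory ProbabilityTheory Set

section

variable {α : Type*} [MeasurableSpace α]

theorem Measure.add_eq_add_of_real_Iic_sub_eq [TopologicalSpace α] [SecondCountableTopology α]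
    [LinearOrder α] [OrderTopology α] [BorelSpace α] {μ₁ ν₁ μ₀ ν₀ : Measure α}
    [IsFiniteMeasure μ₁] [IsFiniteMeasure ν₁] [IsFiniteMeasure μ₀] [IsFiniteMeasure ν₀]
    (h : ∀ u, μ₁.real (Iic u) - ν₁.real (Iic u) = μ₀.real (Iic u) - ν₀.real (Iic u)) :
    μ₁ + ν₀ = μ₀ + ν₁ := by
  refine Measure.ext_of_Iic _ _ fun u => ?_
  rw [← ENNReal.toReal_eq_toReal_iff' (by finiteness) (by finiteness), Measure.add_apply,
    Measure.add_apply, ENNReal.toReal_add (by finiteness) (by finiteness),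
    ENNReal.toReal_add (by finiteness) (by finiteness)]
  linarith [h u, measureReal_def μ₁ (Iic u), measureReal_def ν₁ (Iic u),
    measureReal_def μ₀ (Iic u), measureReal_def ν₀ (Iic u)]

theorem integral_sub_integral_eq_of_add_eq_add {E : Type*} [NormedAddCommGroup E]
    [NormedSpace ℝ E] {μ₁ ν₁ μ₀ ν₀ : Measure α} (h : μ₁ + ν₀ = μ₀ + ν₁) {f : α → E}
    (hμ₁ : Integrable f μ₁) (hν₁ : Integrable f ν₁) (hμ₀ : Integrable f μ₀)
    (hν₀ : Integrable f ν₀) :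
    ∫ u, f u ∂μ₁ - ∫ u, f u ∂ν₁ = ∫ u, f u ∂μ₀ - ∫ u, f u ∂ν₀ := by
  have := congrArg (fun μ => ∫ u, f u ∂μ) h
  simp only [integral_add_measure hμ₁ hν₀, integral_add_measure hμ₀ hν₁] at this
  rw [sub_eq_sub_iff_add_eq_add, this, add_comm]

theorem integral_add_const_sub_integral_add_const {μ ν : Measure α} [IsProbabilityMeasure μ]
    [IsProbabilityMeasure ν] {f : α → ℝ} (hμ : Integrable f μ) (hν : Integrable f ν) (k : ℝ) :
    ∫ u, (f u + k) ∂μ - ∫ u, (f u + k) ∂ν = ∫ u, f u ∂μ - ∫ u, f u ∂ν := by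
  rw [integral_add hμ (integrable_const k), integral_add hν (integrable_const k)]
  simp

theorem integral_eq_integral_map_of_forall_setIntegral_eq {Ω : Type*} [MeasurableSpace Ω]
    {μ : Measure Ω} {U : Ω → α} {Y : Ω → ℝ} {g : α → ℝ}
    (h : ∀ A : Set α, MeasurableSet A →
      ∫ ω in {ω | U ω ∈ A}, Y ω ∂μ = ∫ u in A, g u ∂(μ.map U)) :
    ∫ ω, Y ω ∂μ = ∫ u, g u ∂(μ.map U) := by
  simpa using h univ MeasurableSet.univ

end

theorem stmt1_general {Ω : Type*} [MeasurableSpace Ω] (P : Measure Ω) [IsProbabilityMeasure P]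
    {α β γ : Type*}
    (D : Ω → α) (dH dL : α)
    (Ut Ut1 : Ω → ℝ) (Xt Xt1 : Ω → β) (C : Ω → γ)
    (Yt Yt1 : Ω → ℝ)   -- potential outcomes Y_t(dL) and Y_{t+1}(dL)
    (hUt : Measurable Ut) (hUt1 : Measurable Ut1)
    -- confounder-specific regressions:
    -- g1 u x c = E[Y_{t+1}(dL) | U_{t+1} = u, X_{t+1} = x, C = c]
    -- g0 u x c = E[Y_t(dL) | U_t = u, X_t = x, C = c]
    (g1 g0 : ℝ → β → γ → ℝ)
    (hg1int : ∀ d x c, Integrable (fun u => g1 u x c)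
      (Measure.map Ut1 (P[|{ω | D ω = d ∧ Xt1 ω = x ∧ C ω = c}])))
    (hg0int : ∀ d x c, Integrable (fun u => g0 u x c)
      (Measure.map Ut (P[|{ω | D ω = d ∧ Xt ω = x ∧ C ω = c}])))
    -- (1) time-invariant effect of the unobserved confounder
    (hEffect : ∀ (u1 u0 : ℝ) (x : β) (c : γ),
      g1 u1 x c - g1 u0 x c = g0 u1 x c - g0 u0 x c)
    -- (2) time-invariant imbalance of the unobserved confounder (difference of conditional CDFs)
    (hImbalance : ∀ (u : ℝ) (x : β) (c : γ),
      ((Measure.map Ut1 (P[|{ω | D ω = dH ∧ Xt1 ω = x ∧ C ω = c}])) (Set.Iic u)).toReal -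
          ((Measure.map Ut1 (P[|{ω | D ω = dL ∧ Xt1 ω = x ∧ C ω = c}])) (Set.Iic u)).toReal =
        ((Measure.map Ut (P[|{ω | D ω = dH ∧ Xt ω = x ∧ C ω = c}])) (Set.Iic u)).toReal -
          ((Measure.map Ut (P[|{ω | D ω = dL ∧ Xt ω = x ∧ C ω = c}])) (Set.Iic u)).toReal)
    -- (3) conditional ignorability at time t+1: Y_{t+1}(dL) ⊥ D | (U_{t+1}, X_{t+1}, C)
    (hCI1 : ∀ (d : α) (x : β) (c : γ), P {ω | D ω = d ∧ Xt1 ω = x ∧ C ω = c} ≠ 0 →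
      ∀ A : Set ℝ, MeasurableSet A →
        (∫ ω in {ω | Ut1 ω ∈ A}, Yt1 ω ∂(P[|{ω | D ω = d ∧ Xt1 ω = x ∧ C ω = c}])) =
          ∫ u in A, g1 u x c ∂(Measure.map Ut1 (P[|{ω | D ω = d ∧ Xt1 ω = x ∧ C ω = c}])))
    -- (3) conditional ignorability at time t: Y_t(dL) ⊥ D | (U_t, X_t, C)
    (hCI0 : ∀ (d : α) (x : β) (c : γ), P {ω | D ω = d ∧ Xt ω = x ∧ C ω = c} ≠ 0 →
      ∀ A : Set ℝ, MeasurableSet A →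
        (∫ ω in {ω | Ut ω ∈ A}, Yt ω ∂(P[|{ω | D ω = d ∧ Xt ω = x ∧ C ω = c}])) =
          ∫ u in A, g0 u x c ∂(Measure.map Ut (P[|{ω | D ω = d ∧ Xt ω = x ∧ C ω = c}]))) :
    ∀ (x : β) (c : γ),
      P {ω | D ω = dH ∧ Xt1 ω = x ∧ C ω = c} ≠ 0 →
      P {ω | D ω = dL ∧ Xt1 ω = x ∧ C ω = c} ≠ 0 →
      P {ω | D ω = dH ∧ Xt ω = x ∧ C ω = c} ≠ 0 →
      P {ω | D ω = dL ∧ Xt ω = x ∧ C ω = c} ≠ 0 →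
      (∫ ω, Yt1 ω ∂(P[|{ω | D ω = dH ∧ Xt1 ω = x ∧ C ω = c}])) -
          (∫ ω, Yt1 ω ∂(P[|{ω | D ω = dL ∧ Xt1 ω = x ∧ C ω = c}])) =
        (∫ ω, Yt ω ∂(P[|{ω | D ω = dH ∧ Xt ω = x ∧ C ω = c}])) -
          (∫ ω, Yt ω ∂(P[|{ω | D ω = dL ∧ Xt ω = x ∧ C ω = c}])) := by
  intro x c hH1 hL1 hH0 hL0
  have isProbabilityMeasure_map_cond : ∀ {d : α} {X : Ω → β} {U : Ω → ℝ}, Measurable U →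
      P {ω | D ω = d ∧ X ω = x ∧ C ω = c} ≠ 0 →
      IsProbabilityMeasure (Measure.map U (P[|{ω | D ω = d ∧ X ω = x ∧ C ω = c}])) :=
    fun hU hP => have := cond_isProbabilityMeasure hP
      Measure.isProbabilityMeasure_map hU.aemeasurable
  have := isProbabilityMeasure_map_cond hUt1 hH1
  have := isProbabilityMeasure_map_cond hUt1 hL1
  have := isProbabilityMeasure_map_cond hUt hH0
  have := isProbabilityMeasure_map_cond hUt hL0
  have hg1 : (fun u => g1 u x c) = fun u => g0 u x c + (g1 0 x c - g0 0 x c) := by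
    funext u
    linarith [hEffect u 0 x c]
  have hg0int1 : ∀ d, Integrable (fun u => g0 u x c)
      (Measure.map Ut1 (P[|{ω | D ω = d ∧ Xt1 ω = x ∧ C ω = c}])) := fun d =>
    integrable_add_const_iff.mp (hg1 ▸ hg1int d x c)
  rw [integral_eq_integral_map_of_forall_setIntegral_eq (hCI1 dH x c hH1),
    integral_eq_integral_map_of_forall_setIntegral_eq (hCI1 dL x c hL1),
    integral_eq_integral_map_of_forall_setIntegral_eq (hCI0 dH x c hH0),
    integral_eq_integral_map_of_forall_setIntegral_eq (hCI0 dL x c hL0), hg1,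
    integral_add_const_sub_integral_add_const (hg0int1 dH) (hg0int1 dL)]
  exact integral_sub_integral_eq_of_add_eq_add
    (Measure.add_eq_add_of_real_Iic_sub_eq (hImbalance · x c))
    (hg0int1 dH) (hg0int1 dL) (hg0int dH x c) (hg0int dL x c)

/-- Under (1) time-invariant effect of the unobserved confounder `U` on the potential outcome
`Y(dL)`, (2) time-invariant imbalance of `U` across treatment arms (equality of differences of
conditional CDFs), and (3) conditional ignorability given `(U, X, C)` at both time periods
(expressed by saying the confounder-specific regressions are versions of the conditional means
within each treatment arm), the conditional selection bias at time `t+1` equals the conditional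
selection bias at time `t`. -/
theorem stmt1 {Ω : Type*} [MeasurableSpace Ω] (P : Measure Ω) [IsProbabilityMeasure P]
    {α β γ : Type*}
    (D : Ω → α) (dH dL : α)
    (Ut Ut1 : Ω → ℝ) (Xt Xt1 : Ω → β) (C : Ω → γ)
    (Yt Yt1 : Ω → ℝ)   -- potential outcomes Y_t(dL) and Y_{t+1}(dL)
    (hUt : Measurable Ut) (hUt1 : Measurable Ut1)
    (hYt : Integrable Yt P) (hYt1 : Integrable Yt1 P)
    -- confounder-specific regressions:
    -- g1 u x c = E[Y_{t+1}(dL) | U_{t+1} = u, X_{t+1} = x, C = c]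
    -- g0 u x c = E[Y_t(dL) | U_t = u, X_t = x, C = c]
    (g1 g0 : ℝ → β → γ → ℝ)
    (hg1int : ∀ d x c, Integrable (fun u => g1 u x c)
      (Measure.map Ut1 (P[|{ω | D ω = d ∧ Xt1 ω = x ∧ C ω = c}])))
    (hg0int : ∀ d x c, Integrable (fun u => g0 u x c)
      (Measure.map Ut (P[|{ω | D ω = d ∧ Xt ω = x ∧ C ω = c}])))
    -- (1) time-invariant effect of the unobserved confounder
    (hEffect : ∀ (u1 u0 : ℝ) (x : β) (c : γ),
      g1 u1 x c - g1 u0 x c = g0 u1 x c - g0 u0 x c)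
    -- (2) time-invariant imbalance of the unobserved confounder (difference of conditional CDFs)
    (hImbalance : ∀ (u : ℝ) (x : β) (c : γ),
      ((Measure.map Ut1 (P[|{ω | D ω = dH ∧ Xt1 ω = x ∧ C ω = c}])) (Set.Iic u)).toReal -
          ((Measure.map Ut1 (P[|{ω | D ω = dL ∧ Xt1 ω = x ∧ C ω = c}])) (Set.Iic u)).toReal =
        ((Measure.map Ut (P[|{ω | D ω = dH ∧ Xt ω = x ∧ C ω = c}])) (Set.Iic u)).toReal -
          ((Measure.map Ut (P[|{ω | D ω = dL ∧ Xt ω = x ∧ C ω = c}])) (Set.Iic u)).toReal)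
    -- (3) conditional ignorability at time t+1: Y_{t+1}(dL) ⊥ D | (U_{t+1}, X_{t+1}, C)
    (hCI1 : ∀ (d : α) (x : β) (c : γ), P {ω | D ω = d ∧ Xt1 ω = x ∧ C ω = c} ≠ 0 →
      ∀ A : Set ℝ, MeasurableSet A →
        (∫ ω in {ω | Ut1 ω ∈ A}, Yt1 ω ∂(P[|{ω | D ω = d ∧ Xt1 ω = x ∧ C ω = c}])) =
          ∫ u in A, g1 u x c ∂(Measure.map Ut1 (P[|{ω | D ω = d ∧ Xt1 ω = x ∧ C ω = c}])))
    -- (3) conditional ignorability at time t: Y_t(dL) ⊥ D | (U_t, X_t, C)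
    (hCI0 : ∀ (d : α) (x : β) (c : γ), P {ω | D ω = d ∧ Xt ω = x ∧ C ω = c} ≠ 0 →
      ∀ A : Set ℝ, MeasurableSet A →
        (∫ ω in {ω | Ut ω ∈ A}, Yt ω ∂(P[|{ω | D ω = d ∧ Xt ω = x ∧ C ω = c}])) =
          ∫ u in A, g0 u x c ∂(Measure.map Ut (P[|{ω | D ω = d ∧ Xt ω = x ∧ C ω = c}]))) :
    ∀ (x : β) (c : γ),
      P {ω | D ω = dH ∧ Xt1 ω = x ∧ C ω = c} ≠ 0 →
      P {ω | D ω = dL ∧ Xt1 ω = x ∧ C ω = c} ≠ 0 →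
      P {ω | D ω = dH ∧ Xt ω = x ∧ C ω = c} ≠ 0 →
      P {ω | D ω = dL ∧ Xt ω = x ∧ C ω = c} ≠ 0 →
      (∫ ω, Yt1 ω ∂(P[|{ω | D ω = dH ∧ Xt1 ω = x ∧ C ω = c}])) -
          (∫ ω, Yt1 ω ∂(P[|{ω | D ω = dL ∧ Xt1 ω = x ∧ C ω = c}])) =
        (∫ ω, Yt ω ∂(P[|{ω | D ω = dH ∧ Xt ω = x ∧ C ω = c}])) -
          (∫ ω, Yt ω ∂(P[|{ω | D ω = dL ∧ Xt ω = x ∧ C ω = c}])) :=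
  stmt1_general P D dH dL Ut Ut1 Xt Xt1 C Yt Yt1 hUt hUt1 g1 g0 hg1int hg0int hEffect hImbalance
    hCI1 hCI0
end

section
/- In a directed acyclic graph G, let T (treatment), P (placebo outcome), and Y (outcome) be distinct vertices such that P is not an ancestor of T and Y is not an ancestor of T. Let S be a set of vertices containing no descendants of P and no descendants of T. If every back-door path from T to P (a path starting with an edge into T) that is unblocked given S contains, as its final edge, an edge into P, and conditioning on a set of descendants of P can block such a path unblocked by S, then a contradiction arises; i.e., adding descendants of P to the conditioning set S cannot block any back-door path from T to P that S leaves unblocked. -/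
/-! Directed walks in a digraph `G : V → V → Prop` together with the notions needed for
d-separation: colliders, blocking, back-door paths. -/

variable {V : Type*}

/-- A walk in a directed graph that may traverse edges in either direction.
`fwd h w` prepends the edge `a ⟶ b` (traversed from `a` towards `b`),
`bwd h w` prepends the edge `b ⟶ a` (traversed from `a` towards `b` against its direction). -/
inductive DWalk (G : V → V → Prop) : V → V → Type _
  | nil (a : V) : DWalk G a a
  | fwd {a b c : V} (h : G a b) (w : DWalk G b c) : DWalk G a c
  | bwd {a b c : V} (h : G b a) (w : DWalk G b c) : DWalk G a c

namespace DWalk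

variable {G : V → V → Prop}

/-- Vertices visited by the walk, in order. -/
def support : {a c : V} → DWalk G a c → List V
  | a, _, nil _ => [a]
  | a, _, fwd _ w => a :: w.support
  | a, _, bwd _ w => a :: w.support

/-- A path is a walk with no repeated vertices. -/
def IsPath {a c : V} (w : DWalk G a c) : Prop := w.support.Nodup

/-- `Des G v x`: `x` is a (strict) descendant of `v`, i.e. reachable by a nonempty
directed path. -/
def Des (G : V → V → Prop) (v x : V) : Prop := Relation.TransGen G v x

/-- The walk starts with an edge pointing into its first vertex (back-door). -/
def StartsInto : {a c : V} → DWalk G a c → Prop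
  | _, _, nil _ => False
  | _, _, fwd _ _ => False
  | _, _, bwd _ _ => True

/-- The walk ends with an edge pointing into its last vertex. -/
def EndsInto : {a c : V} → DWalk G a c → Prop
  | _, _, nil _ => False
  | _, _, fwd _ (nil _) => True
  | _, _, bwd _ (nil _) => False
  | _, _, fwd _ (fwd h w) => EndsInto (fwd h w)
  | _, _, fwd _ (bwd h w) => EndsInto (bwd h w)
  | _, _, bwd _ (fwd h w) => EndsInto (fwd h w)
  | _, _, bwd _ (bwd h w) => EndsInto (bwd h w)

/-- Concatenation of walks. -/
def append : {a b c : V} → DWalk G a b → DWalk G b c → DWalk G a c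
  | _, _, _, nil _, w => w
  | _, _, _, fwd h w₁, w₂ => fwd h (append w₁ w₂)
  | _, _, _, bwd h w₁, w₂ => bwd h (append w₁ w₂)

/-- `b` occurs as a collider (`→ b ←`) at some interior position of the walk. -/
def IsColliderOn : {a c : V} → DWalk G a c → V → Prop
  | _, _, nil _, _ => False
  | _, _, fwd _ (nil _), _ => False
  | _, _, bwd _ (nil _), _ => False
  | _, _, fwd (b := b) _ (fwd h w), x => IsColliderOn (fwd h w) x
  | _, _, fwd (b := b) _ (bwd h w), x => x = b ∨ IsColliderOn (bwd h w) x
  | _, _, bwd (b := b) _ (fwd h w), x => IsColliderOn (fwd h w) x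
  | _, _, bwd (b := b) _ (bwd h w), x => IsColliderOn (bwd h w) x

/-- `b` occurs as a non-collider at some interior position of the walk. -/
def IsNonColliderOn : {a c : V} → DWalk G a c → V → Prop
  | _, _, nil _, _ => False
  | _, _, fwd _ (nil _), _ => False
  | _, _, bwd _ (nil _), _ => False
  | _, _, fwd (b := b) _ (fwd h w), x => x = b ∨ IsNonColliderOn (fwd h w) x
  | _, _, fwd (b := b) _ (bwd h w), x => IsNonColliderOn (bwd h w) x
  | _, _, bwd (b := b) _ (fwd h w), x => x = b ∨ IsNonColliderOn (fwd h w) x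
  | _, _, bwd (b := b) _ (bwd h w), x => x = b ∨ IsNonColliderOn (bwd h w) x

/-- The walk is blocked by the conditioning set `S` (d-separation blocking): some interior
non-collider lies in `S`, or some interior collider has neither itself nor any of its
descendants in `S`. -/
def Blocked (S : Set V) : {a c : V} → DWalk G a c → Prop
  | _, _, nil _ => False
  | _, _, fwd _ (nil _) => False
  | _, _, bwd _ (nil _) => False
  | _, _, fwd (b := b) _ (fwd h w) => b ∈ S ∨ Blocked S (fwd h w)
  | _, _, fwd (b := b) _ (bwd h w) =>
      (b ∉ S ∧ ∀ x, Des G b x → x ∉ S) ∨ Blocked S (bwd h w)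
  | _, _, bwd (b := b) _ (fwd h w) => b ∈ S ∨ Blocked S (fwd h w)
  | _, _, bwd (b := b) _ (bwd h w) => b ∈ S ∨ Blocked S (bwd h w)

end DWalk

/-- d-separation: every path between `a` and `c` is blocked by `S`. -/
def DSep (G : V → V → Prop) (S : Set V) (a c : V) : Prop :=
  ∀ w : DWalk G a c, w.IsPath → w.Blocked S

/-- Acyclicity of a directed graph. -/
def Acyclic (G : V → V → Prop) : Prop := ∀ v : V, ¬ Relation.TransGen G v v

open DWalk

/-!
The descendants of `Pv` form a successor-closed set `A` that misses `S`. An open collider has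
itself or a descendant in `S`, so it lies outside `A`; hence an `S`-open walk that enters `A` by a
forward edge must run forward to its end, and one that leaves `A` backwards would drag its
predecessor into `A`. A walk from `T ∉ A` to `Pv ∉ A` (acyclicity) therefore avoids `A`
altogether. Adding vertices off the walk to `S` can only open colliders, so the walk stays open
under `S ∪ D'`.
-/

namespace DWalk

variable {G : V → V → Prop} {S A : Set V}

theorem mem_of_des (hA : ∀ ⦃x y⦄, x ∈ A → G x y → y ∈ A) {a x : V} (ha : a ∈ A)
    (hx : Des G a x) : x ∈ A := by
  induction hx with
  | single h => exact hA ha h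
  | tail _ h ih => exact hA ih h

theorem blocked_fwd_of_blocked {a b c : V} (h : G a b) {w : DWalk G b c} (hw : w.Blocked S) :
    (fwd h w).Blocked S := by
  cases w with
  | nil => exact hw.elim
  | fwd => exact Or.inr hw
  | bwd => exact Or.inr hw

theorem blocked_bwd_of_blocked {a b c : V} (h : G b a) {w : DWalk G b c} (hw : w.Blocked S) :
    (bwd h w).Blocked S := by
  cases w with
  | nil => exact hw.elim
  | fwd => exact Or.inr hw
  | bwd => exact Or.inr hw

theorem collider_notMem_of_not_blocked (hA : ∀ ⦃x y⦄, x ∈ A → G x y → y ∈ A)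
    (hSA : ∀ x ∈ S, x ∉ A) {a b d c : V} (h : G a b) (h' : G d b) (w : DWalk G d c)
    (hnb : ¬ (fwd h (bwd h' w)).Blocked S) : b ∉ A := fun hb =>
  hnb (Or.inl ⟨fun hbS => hSA b hbS hb, fun x hx hxS => hSA x hxS (mem_of_des hA hb hx)⟩)

theorem mem_of_not_blocked_fwd (hA : ∀ ⦃x y⦄, x ∈ A → G x y → y ∈ A)
    (hSA : ∀ x ∈ S, x ∉ A) :
    ∀ {a b c : V} (h : G a b) (w : DWalk G b c), ¬ (fwd h w).Blocked S → a ∈ A → c ∈ A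
  | _, _, _, h, nil _, _, ha => hA ha h
  | _, _, _, h, fwd h' w, hnb, ha =>
      mem_of_not_blocked_fwd hA hSA h' w (fun hw => hnb (Or.inr hw)) (hA ha h)
  | _, _, _, h, bwd h' w, hnb, ha =>
      (collider_notMem_of_not_blocked hA hSA h h' w hnb (hA ha h)).elim

theorem notMem_of_mem_support_of_not_blocked (hA : ∀ ⦃x y⦄, x ∈ A → G x y → y ∈ A)
    (hSA : ∀ x ∈ S, x ∉ A) :
    ∀ {a c : V} (w : DWalk G a c), ¬ w.Blocked S → a ∉ A → c ∉ A →
      ∀ x ∈ w.support, x ∉ A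
  | _, _, nil _, _, ha, _, x, hx => by
      rw [support, List.mem_singleton] at hx
      exact hx ▸ ha
  | _, c, fwd (b := b) h w, hnb, ha, hc, x, hx => by
      have hw : ¬ w.Blocked S := fun hw => hnb (blocked_fwd_of_blocked h hw)
      have hb : b ∉ A := by
        cases w with
        | nil => exact hc
        | fwd h' w' => exact fun hb => hc (mem_of_not_blocked_fwd hA hSA h' w' hw hb)
        | bwd h' w' => exact collider_notMem_of_not_blocked hA hSA h h' w' hnb
      rcases List.mem_cons.mp hx with rfl | hx
      · exact ha
      · exact notMem_of_mem_support_of_not_blocked hA hSA w hw hb hc x hx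
  | _, _, bwd h w, hnb, ha, hc, x, hx => by
      have hw : ¬ w.Blocked S := fun hw => hnb (blocked_bwd_of_blocked h hw)
      rcases List.mem_cons.mp hx with rfl | hx
      · exact ha
      · exact notMem_of_mem_support_of_not_blocked hA hSA w hw (fun hb => ha (hA hb h)) hc x hx

theorem blocked_of_blocked_union {D : Set V} :
    ∀ {a c : V} (w : DWalk G a c), (∀ x ∈ w.support, x ∉ D) →
      w.Blocked (S ∪ D) → w.Blocked S
  | _, _, nil _, _, hb => hb
  | _, _, fwd _ (nil _), _, hb => hb
  | _, _, bwd _ (nil _), _, hb => hb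
  | _, _, fwd _ (fwd _ _), hD, hb =>
      hb.imp (·.resolve_right (hD _ (.tail _ (.head _))))
        (blocked_of_blocked_union _ fun x hx => hD x (.tail _ hx))
  | _, _, fwd _ (bwd _ _), hD, hb =>
      hb.imp
        (fun ⟨hbSD, hdesSD⟩ =>
          ⟨fun hbS => hbSD (.inl hbS), fun x hx hxS => hdesSD x hx (.inl hxS)⟩)
        (blocked_of_blocked_union _ fun x hx => hD x (.tail _ hx))
  | _, _, bwd _ (fwd _ _), hD, hb =>
      hb.imp (·.resolve_right (hD _ (.tail _ (.head _))))
        (blocked_of_blocked_union _ fun x hx => hD x (.tail _ hx))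
  | _, _, bwd _ (bwd _ _), hD, hb =>
      hb.imp (·.resolve_right (hD _ (.tail _ (.head _))))
        (blocked_of_blocked_union _ fun x hx => hD x (.tail _ hx))

end DWalk

theorem stmt4_general {V : Type*} (G : V → V → Prop) (hacyc : Acyclic G)
    (T Pv : V)
    (hPnotAncT : ¬ Des G Pv T)
    (S : Set V)
    (hSnoDesP : ∀ v ∈ S, ¬ Des G Pv v)
    (D' : Set V) (hD' : ∀ v ∈ D', Des G Pv v)
    (π : DWalk G T Pv)
    (hunblocked : ¬ π.Blocked S) :
    ¬ π.Blocked (S ∪ D') := by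
  have hclosed : ∀ ⦃x y⦄, x ∈ {v | Des G Pv v} → G x y → y ∈ {v | Des G Pv v} :=
    fun _ _ hx h => Relation.TransGen.tail hx h
  have hoff := notMem_of_mem_support_of_not_blocked hclosed hSnoDesP π hunblocked hPnotAncT
    (hacyc Pv)
  exact fun hb =>
    hunblocked (blocked_of_blocked_union π (fun x hx hxD => hoff x hx (hD' x hxD)) hb)

/-- Adding descendants of the placebo outcome `Pv` to the conditioning set `S` cannot block
any back-door path from the treatment `T` to `Pv` that `S` leaves unblocked, provided the DAG
is acyclic, `Pv` is not an ancestor of `T`, `Y` is not an ancestor of `T`, and `S` contains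
no descendants of `Pv` and no descendants of `T`. -/
theorem stmt4 {V : Type*} (G : V → V → Prop) (hacyc : Acyclic G)
    (T Pv Y : V) (hTP : T ≠ Pv) (hTY : T ≠ Y) (hPY : Pv ≠ Y)
    (hPnotAncT : ¬ Des G Pv T)
    (hYnotAncT : ¬ Des G Y T)
    (S : Set V)
    (hSnoDesP : ∀ v ∈ S, ¬ Des G Pv v)
    (hSnoDesT : ∀ v ∈ S, ¬ Des G T v)
    (D' : Set V) (hD' : ∀ v ∈ D', Des G Pv v)
    (π : DWalk G T Pv) (hpath : π.IsPath)
    (hback : π.StartsInto) (hend : π.EndsInto)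
    (hunblocked : ¬ π.Blocked S) :
    ¬ π.Blocked (S ∪ D') :=
  stmt4_general G hacyc T Pv hPnotAncT S hSnoDesP D' hD' π hunblocked
end

section
/- In a finite DAG, if B is a descendant of vertex Y and B lies as a non-collider on a path π from vertex K to Y with respect to conditioning set S, where S contains no descendants of Y and no descendants of K, and Y is not an ancestor of K, then on at least one side of B the path π must contain a collider that is a descendant of Y, and hence π is blocked by S. -/
/-! Directed walks in a digraph `G : V → V → Prop` together with the notions needed for
d-separation: colliders, blocking, back-door paths. -/

variable {V : Type*}

open DWalk
/-! Since `B` is a non-collider, one of its two edges on `π` points away from `B`. Following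
`π` in that direction the edges keep pointing forward, so every vertex reached is a descendant
of `Y`, until the first collider, which is therefore a descendant of `Y` as well. If no collider
comes, the directed chain runs into an endpoint: into `K`, contradicting that `Y` is not an
ancestor of `K`, or into `Y`, closing a cycle. A collider in `Des Y` blocks `π`, because `S`
avoids `Des Y`. -/

namespace DWalk

variable {G : V → V → Prop} {P : V → Prop}

lemma exists_isColliderOn_or_of_fwd (hP : ∀ ⦃u v⦄, G u v → P u → P v) {a b c : V}
    (h : G a b) (w : DWalk G b c) (hb : P b) :
    (∃ x, (fwd h w).IsColliderOn x ∧ P x) ∨ P c := by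
  match w with
  | nil _ => exact .inr hb
  | fwd h' w' =>
    obtain ⟨x, hx, hPx⟩ | hc := exists_isColliderOn_or_of_fwd hP h' w' (hP h' hb)
    · exact .inl ⟨x, hx, hPx⟩
    · exact .inr hc
  | bwd _ _ => exact .inl ⟨_, .inl rfl, hb⟩

/-- The middle disjunct is what the induction needs: when the chain leaves the walk through
its first vertex, the first edge points into that vertex. -/
lemma exists_isColliderOn_or_of_isNonColliderOn (hP : ∀ ⦃u v⦄, G u v → P u → P v) {B : V}
    (hB : P B) {a c : V} (w : DWalk G a c) (hnc : w.IsNonColliderOn B) :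
    (∃ x, w.IsColliderOn x ∧ P x) ∨ (P a ∧ w.StartsInto) ∨ P c := by
  match w with
  | nil _ | fwd _ (nil _) | bwd _ (nil _) => exact hnc.elim
  | fwd _ (fwd h' w') | bwd _ (fwd h' w') =>
    obtain rfl | hnc := hnc
    · obtain ⟨x, hx, hPx⟩ | hc := exists_isColliderOn_or_of_fwd hP h' w' (hP h' hB)
      · exact .inl ⟨x, hx, hPx⟩
      · exact .inr (.inr hc)
    · obtain ⟨x, hx, hPx⟩ | ⟨-, hstart⟩ | hc :=
        exists_isColliderOn_or_of_isNonColliderOn hP hB (fwd h' w') hnc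
      · exact .inl ⟨x, hx, hPx⟩
      · exact hstart.elim
      · exact .inr (.inr hc)
  | fwd _ (bwd h' w') =>
    obtain ⟨x, hx, hPx⟩ | ⟨hb, -⟩ | hc :=
      exists_isColliderOn_or_of_isNonColliderOn hP hB (bwd h' w') hnc
    · exact .inl ⟨x, .inr hx, hPx⟩
    · exact .inl ⟨_, .inl rfl, hb⟩
    · exact .inr (.inr hc)
  | bwd h (bwd h' w') =>
    obtain rfl | hnc := hnc
    · exact .inr (.inl ⟨hP h hB, trivial⟩)
    · obtain ⟨x, hx, hPx⟩ | ⟨hb, -⟩ | hc :=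
        exists_isColliderOn_or_of_isNonColliderOn hP hB (bwd h' w') hnc
      · exact .inl ⟨x, hx, hPx⟩
      · exact .inr (.inl ⟨hP h hb, trivial⟩)
      · exact .inr (.inr hc)

lemma blocked_of_isColliderOn {S : Set V} {a c x : V} (w : DWalk G a c)
    (hcol : w.IsColliderOn x) (hxS : x ∉ S) (hdS : ∀ d, Des G x d → d ∉ S) : w.Blocked S := by
  match w with
  | nil _ | fwd _ (nil _) | bwd _ (nil _) => exact hcol.elim
  | fwd _ (fwd h' w') | bwd _ (fwd h' w') | bwd _ (bwd h' w') =>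
    exact .inr (blocked_of_isColliderOn _ hcol hxS hdS)
  | fwd _ (bwd h' w') =>
    obtain rfl | hcol := hcol
    · exact .inl ⟨hxS, hdS⟩
    · exact .inr (blocked_of_isColliderOn _ hcol hxS hdS)

end DWalk

theorem stmt5_general {V : Type*} (G : V → V → Prop) (hacyc : Acyclic G)
    (K Y B : V)
    (S : Set V)
    (hSdesY : ∀ v, Des G Y v → v ∉ S)
    (hYnotAncK : ¬ Des G Y K)
    (π : DWalk G K Y)
    (hBdes : Des G Y B)
    (hBnoncol : π.IsNonColliderOn B) :
    (∃ x, π.IsColliderOn x ∧ Des G Y x) ∧ π.Blocked S := by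
  have hclosed : ∀ ⦃u v⦄, G u v → Des G Y u → Des G Y v := fun _ _ h hu => hu.tail h
  obtain ⟨x, hx, hYx⟩ | ⟨hYK, -⟩ | hYY :=
    exists_isColliderOn_or_of_isNonColliderOn hclosed hBdes π hBnoncol
  · exact ⟨⟨x, hx, hYx⟩,
      blocked_of_isColliderOn π hx (hSdesY x hYx) fun d hxd => hSdesY d (hYx.trans hxd)⟩
  · exact absurd hYK hYnotAncK
  · exact absurd hYY (hacyc Y)

/-- If `B` is a descendant of `Y` lying as a non-collider on a path `π` from `K` to `Y`,
where `S` contains no descendants of `Y` and no descendants of `K`, the DAG is acyclic and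
`Y` is not an ancestor of `K`, then `π` contains a collider that is a descendant of `Y`,
and hence `π` is blocked by `S`. -/
theorem stmt5 {V : Type*} (G : V → V → Prop) (hacyc : Acyclic G)
    (K Y B : V)
    (S : Set V)
    (hSdesY : ∀ v, Des G Y v → v ∉ S) (hSdesK : ∀ v, Des G K v → v ∉ S)
    (hYnotAncK : ¬ Des G Y K)
    (π : DWalk G K Y) (hpath : π.IsPath)
    (hBdes : Des G Y B)
    (hBnoncol : π.IsNonColliderOn B) :
    (∃ x, π.IsColliderOn x ∧ Des G Y x) ∧ π.Blocked S :=
  stmt5_general G hacyc K Y B S hSdesY hYnotAncK π hBdes hBnoncol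
end

section
/- Global Markov property from pairwise Markov property for positive distributions: if a strictly positive joint distribution P over random variables indexed by the vertices of a finite undirected graph G satisfies the pairwise Markov property (X_a ⊥ X_b | X_{V∖{a,b}} whenever {a,b} is not an edge of G), then P satisfies the global Markov property: whenever a set S of vertices separates vertices a and b in G (every path from a to b intersects S), X_a ⊥ X_b | X_S. -/
/-!
Induct downwards on the separator `S`. If `S ∪ {a, b}` is everything, the claim is the pairwise
Markov property, since a separator avoiding `a` and `b` forces `a` and `b` to be non-adjacent.
Otherwise pick a further vertex `c`. The larger set `S ∪ {c}` still separates `a` from `b`, and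
one of `S ∪ {b}`, `S ∪ {a}` separates `c` from `a`, resp. from `b` (else the two walks to `c`
concatenate into a walk from `a` to `b` missing `S`). By induction this gives
`a ⫫ b | S ∪ {c}` and, say, `a ⫫ c | S ∪ {b}`; for a positive distribution these combine to
`a ⫫ b | S` (the intersection property of conditional independence).
-/

open Finset

/-- The marginal of the joint pmf `p` over the coordinates in `A`, evaluated at the
assignment `x` (i.e. the probability that the coordinates in `A` agree with `x`). -/
def margin {V α : Type*} [Fintype V] [DecidableEq V] [Fintype α] [DecidableEq α]
    (p : (V → α) → ℝ) (A : Finset V) (x : V → α) : ℝ :=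
  ∑ y ∈ Finset.univ.filter (fun y : V → α => ∀ v ∈ A, y v = x v), p y

/-- `X_a` and `X_b` are conditionally independent given the coordinates in `S`, for the joint
pmf `p`: the usual product factorization of marginals. -/
def CondIndepCoord {V α : Type*} [Fintype V] [DecidableEq V] [Fintype α] [DecidableEq α]
    (p : (V → α) → ℝ) (a b : V) (S : Finset V) : Prop :=
  ∀ x : V → α,
    margin p (insert a (insert b S)) x * margin p S x =
      margin p (insert a S) x * margin p (insert b S) x

namespace SimpleGraph

variable {V : Type*} (G : SimpleGraph V)

def Separates (S : Set V) (a b : V) : Prop :=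
  ∀ w : G.Walk a b, ∃ v ∈ w.support, v ∈ S

variable {G}

theorem Separates.mono {S T : Set V} {a b : V} (h : G.Separates S a b) (hST : S ⊆ T) :
    G.Separates T a b := fun w =>
  let ⟨v, hv, hvS⟩ := h w
  ⟨v, hv, hST hvS⟩

theorem Separates.not_adj {S : Set V} {a b : V} (h : G.Separates S a b) (ha : a ∉ S)
    (hb : b ∉ S) : ¬ G.Adj a b := fun hadj => by
  obtain ⟨v, hv, hvS⟩ := h (Walk.cons hadj Walk.nil)
  simp only [Walk.support_cons, Walk.support_nil, List.mem_cons, List.not_mem_nil,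
    or_false] at hv
  rcases hv with rfl | rfl
  exacts [ha hvS, hb hvS]

theorem Separates.insert_left_or_insert_right {S : Set V} {a b : V} (h : G.Separates S a b)
    (c : V) : G.Separates (insert b S) a c ∨ G.Separates (insert a S) b c := by
  by_contra! hboth
  obtain ⟨⟨wa, hwa⟩, ⟨wb, hwb⟩⟩ : (∃ w : G.Walk a c, ∀ v ∈ w.support, v ∉ insert b S) ∧
      (∃ w : G.Walk b c, ∀ v ∈ w.support, v ∉ insert a S) := by
    simpa only [Separates, not_forall, not_exists, not_and] using hboth
  obtain ⟨v, hv, hvS⟩ := h (wa.append wb.reverse)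
  rw [Walk.mem_support_append_iff, Walk.support_reverse, List.mem_reverse] at hv
  rcases hv with hv | hv
  exacts [hwa v hv (Set.mem_insert_of_mem _ hvS), hwb v hv (Set.mem_insert_of_mem _ hvS)]

end SimpleGraph

section Marginals

variable {V α : Type*} [Fintype V] [DecidableEq V] [Fintype α] [DecidableEq α]
  (p : (V → α) → ℝ)

theorem margin_congr (A : Finset V) {x y : V → α} (h : ∀ v ∈ A, x v = y v) :
    margin p A x = margin p A y := by
  unfold margin
  refine Finset.sum_congr ?_ fun _ _ => rfl
  ext z
  simp only [mem_filter, mem_univ, true_and]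
  exact ⟨fun hz v hv => (hz v hv).trans (h v hv), fun hz v hv => (hz v hv).trans (h v hv).symm⟩

theorem margin_pos (hpos : ∀ x, 0 < p x) (A : Finset V) (x : V → α) : 0 < margin p A x :=
  Finset.sum_pos (fun y _ => hpos y) ⟨x, by simp⟩

theorem margin_update_of_notMem {A : Finset V} {c : V} (hc : c ∉ A) (x : V → α) (t : α) :
    margin p A (Function.update x c t) = margin p A x :=
  margin_congr p A fun _ hv => Function.update_of_ne (ne_of_mem_of_not_mem hv hc) t x

theorem sum_margin_insert_update {A : Finset V} {c : V} (hc : c ∉ A) (x : V → α) :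
    ∑ t : α, margin p (insert c A) (Function.update x c t) = margin p A x := by
  unfold margin
  rw [← Finset.sum_fiberwise (Finset.univ.filter fun y : V → α => ∀ v ∈ A, y v = x v)
    (fun y => y c) p]
  refine Finset.sum_congr rfl fun t _ => Finset.sum_congr ?_ fun _ _ => rfl
  ext y
  have hupd : ∀ v ∈ A, Function.update x c t v = x v :=
    fun v hv => Function.update_of_ne (ne_of_mem_of_not_mem hv hc) t x
  simp only [mem_filter, mem_univ, true_and, Finset.forall_mem_insert, Function.update_self]
  constructor
  · rintro ⟨hyc, hyA⟩
    exact ⟨fun v hv => (hyA v hv).trans (hupd v hv), hyc⟩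
  · rintro ⟨hyA, hyc⟩
    exact ⟨hyc, fun v hv => (hyA v hv).trans (hupd v hv).symm⟩

end Marginals

namespace CondIndepCoord

variable {V α : Type*} [Fintype V] [DecidableEq V] [Fintype α] [DecidableEq α]
  {p : (V → α) → ℝ} {a b c : V} {S : Finset V}

theorem symm (h : CondIndepCoord p a b S) : CondIndepCoord p b a S := fun x => by
  rw [Finset.insert_comm, h x, mul_comm]

/-- Solve both factorizations for the marginal on `{a, b, c} ∪ S` and compare. -/
theorem margin_mul_margin_eq (hpos : ∀ x, 0 < p x) (h₁ : CondIndepCoord p a b (insert c S))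
    (h₂ : CondIndepCoord p a c (insert b S)) (x : V → α) :
    margin p (insert a (insert c S)) x * margin p (insert b S) x =
      margin p (insert a (insert b S)) x * margin p (insert c S) x := by
  have e₁ := h₁ x
  have e₂ := h₂ x
  rw [Finset.insert_comm c b S] at e₂
  apply mul_right_cancel₀ (margin_pos p hpos (insert b (insert c S)) x).ne'
  linear_combination margin p (insert c S) x * e₂ - margin p (insert b S) x * e₁

theorem intersection (hpos : ∀ x, 0 < p x) (hcS : c ∉ S) (hca : c ≠ a) (hcb : c ≠ b)
    (h₁ : CondIndepCoord p a b (insert c S)) (h₂ : CondIndepCoord p a c (insert b S)) :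
    CondIndepCoord p a b S := by
  intro x
  have hcaS : c ∉ insert a S := by simp [hca, hcS]
  have hcbS : c ∉ insert b S := by simp [hcb, hcS]
  have hcabS : c ∉ insert a (insert b S) := by simp [hca, hcb, hcS]
  have hfiber : ∀ t : α,
      margin p (insert c (insert a S)) (Function.update x c t) * margin p (insert b S) x =
        margin p (insert a (insert b S)) x * margin p (insert c S) (Function.update x c t) := by
    intro t
    have h := margin_mul_margin_eq hpos h₁ h₂ (Function.update x c t)
    rwa [Finset.insert_comm a c, margin_update_of_notMem p hcbS,
      margin_update_of_notMem p hcabS] at h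
  have hsum := Finset.sum_congr rfl fun t (_ : t ∈ (Finset.univ : Finset α)) => hfiber t
  rw [← Finset.sum_mul, sum_margin_insert_update p hcaS, ← Finset.mul_sum,
    sum_margin_insert_update p hcS] at hsum
  exact hsum.symm

end CondIndepCoord

section GlobalMarkov

variable {V α : Type*} [Fintype V] [DecidableEq V] [Fintype α] [DecidableEq α]

theorem card_univ_sdiff_insert_lt {S : Finset V} {c : V} (hc : c ∉ S) :
    (univ \ insert c S).card < (univ \ S).card := by
  rw [Finset.sdiff_insert]
  exact Finset.card_erase_lt_of_mem (by simp [hc])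

theorem eq_univ_sdiff_pair_of_insert_insert_eq_univ {S : Finset V} {a b : V} (ha : a ∉ S)
    (hb : b ∉ S) (h : insert a (insert b S) = univ) : S = univ \ {a, b} := by
  ext v
  have hv : v ∈ insert a (insert b S) := h ▸ mem_univ v
  simp only [mem_insert] at hv
  simp only [mem_sdiff, mem_univ, true_and, mem_insert, mem_singleton]
  constructor
  · rintro hvS (rfl | rfl)
    exacts [ha hvS, hb hvS]
  · tauto

theorem condIndepCoord_of_separates (G : SimpleGraph V) (p : (V → α) → ℝ)
    (hpos : ∀ x, 0 < p x)
    (hpairwise : ∀ a b : V, a ≠ b → ¬ G.Adj a b → CondIndepCoord p a b (univ \ {a, b}))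
    {a b : V} (hab : a ≠ b) {S : Finset V} (haS : a ∉ S) (hbS : b ∉ S)
    (hsep : G.Separates S a b) : CondIndepCoord p a b S := by
  rcases (univ \ insert a (insert b S)).eq_empty_or_nonempty with hfull | ⟨c, hc⟩
  · rw [eq_univ_sdiff_pair_of_insert_insert_eq_univ haS hbS
      (univ_subset_iff.mp (sdiff_eq_empty_iff_subset.mp hfull))]
    exact hpairwise a b hab (hsep.not_adj haS hbS)
  · simp only [mem_sdiff, mem_univ, true_and, mem_insert, not_or] at hc
    obtain ⟨hca, hcb, hcS⟩ := hc
    have h₁ : CondIndepCoord p a b (insert c S) :=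
      condIndepCoord_of_separates G p hpos hpairwise hab
        (by simp [haS, Ne.symm hca]) (by simp [hbS, Ne.symm hcb])
        (hsep.mono (by simp [Set.subset_insert]))
    rcases hsep.insert_left_or_insert_right c with hac | hbc
    · have h₂ : CondIndepCoord p a c (insert b S) :=
        condIndepCoord_of_separates G p hpos hpairwise (Ne.symm hca)
          (by simp [haS, hab]) (by simp [hcS, hcb]) (by simpa using hac)
      exact h₁.intersection hpos hcS hca hcb h₂
    · have h₂ : CondIndepCoord p b c (insert a S) :=
        condIndepCoord_of_separates G p hpos hpairwise (Ne.symm hcb)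
          (by simp [hbS, Ne.symm hab]) (by simp [hcS, hca]) (by simpa using hbc)
      exact (h₁.symm.intersection hpos hcS hcb hca h₂).symm
termination_by (univ \ S).card
decreasing_by
  all_goals exact card_univ_sdiff_insert_lt (by assumption)

end GlobalMarkov

theorem stmt11_general {V α : Type*} [Fintype V] [DecidableEq V] [Fintype α] [DecidableEq α]
    (G : SimpleGraph V) (p : (V → α) → ℝ)
    (hpos : ∀ x, 0 < p x)
    (hpairwise : ∀ a b : V, a ≠ b → ¬ G.Adj a b →
      CondIndepCoord p a b (Finset.univ \ {a, b}))
    (a b : V) (hab : a ≠ b) (S : Finset V) (haS : a ∉ S) (hbS : b ∉ S)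
    (hsepar : ∀ w : G.Walk a b, ∃ v ∈ w.support, v ∈ S) :
    CondIndepCoord p a b S :=
  condIndepCoord_of_separates G p hpos hpairwise hab haS hbS hsepar

/-- Pairwise Markov implies global Markov for strictly positive distributions: if a strictly
positive joint pmf `p` over the vertices of a finite undirected graph `G` satisfies the
pairwise Markov property (non-adjacent vertices are conditionally independent given all the
remaining variables), then whenever `S` separates `a` from `b` in `G` (every walk from `a`
to `b` meets `S`), `X_a` and `X_b` are conditionally independent given `X_S`. -/
theorem stmt11 {V α : Type*} [Fintype V] [DecidableEq V] [Fintype α] [DecidableEq α]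
    (G : SimpleGraph V) (p : (V → α) → ℝ)
    (hpos : ∀ x, 0 < p x) (hsum : ∑ x : V → α, p x = 1)
    (hpairwise : ∀ a b : V, a ≠ b → ¬ G.Adj a b →
      CondIndepCoord p a b (Finset.univ \ {a, b}))
    (a b : V) (hab : a ≠ b) (S : Finset V) (haS : a ∉ S) (hbS : b ∉ S)
    (hsepar : ∀ w : G.Walk a b, ∃ v ∈ w.support, v ∈ S) :
    CondIndepCoord p a b S :=
  stmt11_general G p hpos hpairwise a b hab S haS hbS hsepar
end

section
/- If Y(d^L) is conditionally independent of the treatment indicator set {Y_{jt}}_{j∈N_i} given (U, X_{t+1}, V_{t+1}, Z), and the additional variables V_t and {Y_{j,t-1}}_{j∈N_i} are such that (a) V_{t+1} is a descendant of V_t and already in the conditioning set, and (b) {Y_{j,t-1}}_{j∈N_i} are parents of the treatment, then Y(d^L) is also conditionally independent of {Y_{jt}}_{j∈N_i} given the enlarged set (U, X_{t+1}, V_{t+1}, V_t, Z, {Y_{j,t-1}}_{j∈N_i}) — formulated graphically: in a DAG where the stated ancestral relationships hold and the smaller set d-separates the counterfactual node from the treatment, the larger set also d-separates them, because conditioning on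 V_t or the treatment's parents cannot unblock any path (any such unblocking would require them to be colliders or descendants of colliders, contradicted by V_{t+1} ∈ S and the parent relationship respectively). -/
/-! Directed walks in a digraph `G : V → V → Prop` together with the notions needed for
d-separation: colliders, blocking, back-door paths. -/

variable {V : Type*}

open DWalk

namespace DWalk

variable {G : V → V → Prop}

lemma support_cons_tail : ∀ {a c : V} (w : DWalk G a c), support w = a :: (support w).tail
  | _, _, nil _ => rfl
  | _, _, fwd _ _ => rfl
  | _, _, bwd _ _ => rfl

lemma support_ne_nil {a c : V} (w : DWalk G a c) : support w ≠ [] := by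
  rw [support_cons_tail w]; simp

lemma start_mem_support {a c : V} (w : DWalk G a c) : a ∈ support w := by
  rw [support_cons_tail w]; exact List.mem_cons_self

lemma end_mem_support : ∀ {a c : V} (w : DWalk G a c), c ∈ support w
  | _, _, nil _ => List.mem_singleton_self _
  | _, _, fwd _ w => List.mem_cons_of_mem _ (end_mem_support w)
  | _, _, bwd _ w => List.mem_cons_of_mem _ (end_mem_support w)

lemma support_append : ∀ {a b c : V} (w₁ : DWalk G a b) (w₂ : DWalk G b c),
    support (w₁.append w₂) = support w₁ ++ (support w₂).tail
  | _, _, _, nil _, w₂ => by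
      show support w₂ = _ ++ _
      rw [support_cons_tail w₂]; rfl
  | _, _, _, fwd h w₁, w₂ => by
      show _ :: support (w₁.append w₂) = _
      rw [support_append w₁ w₂]; rfl
  | _, _, _, bwd h w₁, w₂ => by
      show _ :: support (w₁.append w₂) = _
      rw [support_append w₁ w₂]; rfl

/-- All steps of the walk traverse edges forwards. -/
def AllFwd : {a c : V} → DWalk G a c → Prop
  | _, _, nil _ => True
  | _, _, fwd _ w => AllFwd w
  | _, _, bwd _ _ => False

lemma allFwd_append : ∀ {a b c : V} {w₁ : DWalk G a b} {w₂ : DWalk G b c},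
    AllFwd w₁ → AllFwd w₂ → AllFwd (w₁.append w₂)
  | _, _, _, nil _, _, _, h₂ => h₂
  | _, _, _, fwd _ w₁, _, h₁, h₂ => allFwd_append (w₁ := w₁) h₁ h₂
  | _, _, _, bwd _ _, _, h₁, _ => h₁.elim

lemma allFwd_append_right : ∀ {a b c : V} (w₁ : DWalk G a b) (w₂ : DWalk G b c),
    AllFwd (w₁.append w₂) → AllFwd w₂
  | _, _, _, nil _, _, h => h
  | _, _, _, fwd _ w₁, w₂, h => allFwd_append_right w₁ w₂ h
  | _, _, _, bwd _ _, _, h => h.elim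

lemma mem_support_allFwd {a c : V} (w : DWalk G a c) :
    AllFwd w → ∀ x ∈ support w, x = a ∨ Des G a x := by
  induction w with
  | nil a =>
      intro _ x hx
      simp only [support, List.mem_singleton] at hx
      exact Or.inl hx
  | fwd h w ih =>
      intro hf x hx
      simp only [support, List.mem_cons] at hx
      rcases hx with rfl | hx
      · exact Or.inl rfl
      · rcases ih hf x hx with rfl | hd
        · exact Or.inr (Relation.TransGen.single h)
        · exact Or.inr (Relation.TransGen.head h hd)
  | bwd h w ih => exact fun hf => hf.elim

lemma allFwd_isPath (hacyc : Acyclic G) {a c : V} (w : DWalk G a c) (hf : AllFwd w) :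
    w.IsPath := by
  induction w with
  | nil a => simp [IsPath, support]
  | fwd h w ih =>
      have hw : IsPath w := ih hf
      simp only [IsPath, support, List.nodup_cons]
      refine ⟨fun hmem => ?_, hw⟩
      rcases mem_support_allFwd w hf _ hmem with rfl | hd
      · exact hacyc _ (Relation.TransGen.single h)
      · exact hacyc _ (Relation.TransGen.head h hd)
  | bwd h w ih => exact hf.elim

lemma ofDes {a b : V} (h : Des G a b) : ∃ w : DWalk G a b, AllFwd w := by
  have h' : Relation.TransGen G a b := h
  clear h
  induction h' using Relation.TransGen.head_induction_on with
  | single hr => exact ⟨fwd hr (nil _), trivial⟩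
  | head hr _ ihh => obtain ⟨w, hw⟩ := ihh; exact ⟨fwd hr w, hw⟩

lemma allFwd_notBlocked {S : Set V} :
    ∀ {a c : V} (w : DWalk G a c), AllFwd w → (∀ x ∈ support w, x ∉ S) → ¬ Blocked S w := by
  intro a c w
  induction w with
  | nil a => intro _ _ hb; simp only [Blocked] at hb
  | fwd h w ih =>
      intro hf hS
      cases w with
      | nil => intro hb; simp only [Blocked] at hb
      | fwd h' w' =>
          intro hb
          simp only [Blocked] at hb
          rcases hb with hb | hb
          · exact hS _ (List.mem_cons_of_mem _ (start_mem_support _)) hb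
          · exact ih hf (fun x hx => hS x (List.mem_cons_of_mem _ hx)) hb
      | bwd h' w' => exact fun _ => hf.elim
  | bwd h w ih => exact fun hf => hf.elim

lemma nc_block {S : Set V} :
    ∀ {a c : V} (w : DWalk G a c) {x : V}, IsNonColliderOn w x → x ∈ S → Blocked S w := by
  intro a c w
  induction w with
  | nil a => intro x h; simp only [IsNonColliderOn] at h
  | fwd h w ih =>
      cases w with
      | nil => intro x h; simp only [IsNonColliderOn] at h
      | fwd h' w' =>
          intro x hnc hxS
          simp only [IsNonColliderOn] at hnc
          simp only [Blocked]
          rcases hnc with rfl | hnc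
          · exact Or.inl hxS
          · exact Or.inr (ih hnc hxS)
      | bwd h' w' =>
          intro x hnc hxS
          simp only [IsNonColliderOn] at hnc
          simp only [Blocked]
          exact Or.inr (ih hnc hxS)
  | bwd h w ih =>
      cases w with
      | nil => intro x h; simp only [IsNonColliderOn] at h
      | fwd h' w' =>
          intro x hnc hxS
          simp only [IsNonColliderOn] at hnc
          simp only [Blocked]
          rcases hnc with rfl | hnc
          · exact Or.inl hxS
          · exact Or.inr (ih hnc hxS)
      | bwd h' w' =>
          intro x hnc hxS
          simp only [IsNonColliderOn] at hnc
          simp only [Blocked]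
          rcases hnc with rfl | hnc
          · exact Or.inl hxS
          · exact Or.inr (ih hnc hxS)

lemma c_block {S : Set V} :
    ∀ {a c : V} (w : DWalk G a c) {x : V}, IsColliderOn w x → x ∉ S →
      (∀ d, Des G x d → d ∉ S) → Blocked S w := by
  intro a c w
  induction w with
  | nil a => intro x h; simp only [IsColliderOn] at h
  | fwd h w ih =>
      cases w with
      | nil => intro x h; simp only [IsColliderOn] at h
      | fwd h' w' =>
          intro x hc h1 h2
          simp only [IsColliderOn] at hc
          simp only [Blocked]
          exact Or.inr (ih hc h1 h2)
      | bwd h' w' =>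
          intro x hc h1 h2
          simp only [IsColliderOn] at hc
          simp only [Blocked]
          rcases hc with rfl | hc
          · exact Or.inl ⟨h1, h2⟩
          · exact Or.inr (ih hc h1 h2)
  | bwd h w ih =>
      cases w with
      | nil => intro x h; simp only [IsColliderOn] at h
      | fwd h' w' =>
          intro x hc h1 h2
          simp only [IsColliderOn] at hc
          simp only [Blocked]
          exact Or.inr (ih hc h1 h2)
      | bwd h' w' =>
          intro x hc h1 h2
          simp only [IsColliderOn] at hc
          simp only [Blocked]
          exact Or.inr (ih hc h1 h2)

lemma blocked_append_left {S : Set V} :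
    ∀ {a b c : V} (w₁ : DWalk G a b) (w₂ : DWalk G b c),
      Blocked S w₁ → Blocked S (w₁.append w₂) := by
  intro a b c w₁
  induction w₁ with
  | nil a => intro w₂ hb; simp only [Blocked] at hb
  | fwd h w ih =>
      intro w₂ hb
      cases w with
      | nil => simp only [Blocked] at hb
      | fwd h' w' =>
          simp only [Blocked] at hb
          show Blocked S (fwd h (fwd h' (w'.append w₂)))
          simp only [Blocked]
          rcases hb with hb | hb
          · exact Or.inl hb
          · exact Or.inr (ih w₂ hb)
      | bwd h' w' =>
          simp only [Blocked] at hb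
          show Blocked S (fwd h (bwd h' (w'.append w₂)))
          simp only [Blocked]
          rcases hb with hb | hb
          · exact Or.inl hb
          · exact Or.inr (ih w₂ hb)
  | bwd h w ih =>
      intro w₂ hb
      cases w with
      | nil => simp only [Blocked] at hb
      | fwd h' w' =>
          simp only [Blocked] at hb
          show Blocked S (bwd h (fwd h' (w'.append w₂)))
          simp only [Blocked]
          rcases hb with hb | hb
          · exact Or.inl hb
          · exact Or.inr (ih w₂ hb)
      | bwd h' w' =>
          simp only [Blocked] at hb
          show Blocked S (bwd h (bwd h' (w'.append w₂)))
          simp only [Blocked]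
          rcases hb with hb | hb
          · exact Or.inl hb
          · exact Or.inr (ih w₂ hb)

lemma final_notBlocked {S : Set V} :
    ∀ {a m z : V} (w₁ : DWalk G a m) (q : DWalk G m z),
      AllFwd q → (∀ x ∈ support q, x ∉ S) → ¬ Blocked S w₁ → ¬ Blocked S (w₁.append q) := by
  intro a m z w₁
  induction w₁ with
  | nil a => intro q hf hS _; exact allFwd_notBlocked q hf hS
  | fwd h w ih =>
      intro q hf hS hnb
      cases w with
      | nil =>
          cases q with
          | nil => intro hb; simp only [append, Blocked] at hb
          | fwd h' q' =>
              intro hb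
              show False
              have hb' : Blocked S (fwd h (fwd h' q')) := hb
              simp only [Blocked] at hb'
              rcases hb' with hb' | hb'
              · exact hS _ (start_mem_support _) hb'
              · exact allFwd_notBlocked _ hf hS hb'
          | bwd h' q' => exact fun _ => hf.elim
      | fwd h' w' =>
          intro hb
          have hb' : Blocked S (fwd h (fwd h' (w'.append q))) := hb
          simp only [Blocked] at hb'
          simp only [Blocked, not_or] at hnb
          rcases hb' with hb' | hb'
          · exact hnb.1 hb'
          · exact ih q hf hS hnb.2 hb'
      | bwd h' w' =>
          intro hb
          have hb' : Blocked S (fwd h (bwd h' (w'.append q))) := hb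
          simp only [Blocked] at hb'
          simp only [Blocked, not_or] at hnb
          rcases hb' with hb' | hb'
          · exact hnb.1 hb'
          · exact ih q hf hS hnb.2 hb'
  | bwd h w ih =>
      intro q hf hS hnb
      cases w with
      | nil =>
          cases q with
          | nil => intro hb; simp only [append, Blocked] at hb
          | fwd h' q' =>
              intro hb
              have hb' : Blocked S (bwd h (fwd h' q')) := hb
              simp only [Blocked] at hb'
              rcases hb' with hb' | hb'
              · exact hS _ (start_mem_support _) hb'
              · exact allFwd_notBlocked _ hf hS hb'
          | bwd h' q' => exact fun _ => hf.elim
      | fwd h' w' =>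
          intro hb
          have hb' : Blocked S (bwd h (fwd h' (w'.append q))) := hb
          simp only [Blocked] at hb'
          simp only [Blocked, not_or] at hnb
          rcases hb' with hb' | hb'
          · exact hnb.1 hb'
          · exact ih q hf hS hnb.2 hb'
      | bwd h' w' =>
          intro hb
          have hb' : Blocked S (bwd h (bwd h' (w'.append q))) := hb
          simp only [Blocked] at hb'
          simp only [Blocked, not_or] at hnb
          rcases hb' with hb' | hb'
          · exact hnb.1 hb'
          · exact ih q hf hS hnb.2 hb'

lemma splitAt :
    ∀ {a z : V} (w : DWalk G a z) (v : V), v ∈ support w →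
      ∃ (w₁ : DWalk G a v) (w₂ : DWalk G v z), w = w₁.append w₂ := by
  intro a z w
  induction w with
  | nil a =>
      intro v hv
      simp only [support, List.mem_singleton] at hv
      subst hv
      refine ⟨nil _, nil _, ?_⟩
      rfl
  | fwd h w ih =>
      intro v hv
      simp only [support, List.mem_cons] at hv
      rcases hv with rfl | hv
      · exact ⟨nil _, fwd h w, rfl⟩
      · obtain ⟨w₁, w₂, heq⟩ := ih v hv
        exact ⟨fwd h w₁, w₂, by rw [heq]; rfl⟩
  | bwd h w ih =>
      intro v hv
      simp only [support, List.mem_cons] at hv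
      rcases hv with rfl | hv
      · exact ⟨nil _, bwd h w, rfl⟩
      · obtain ⟨w₁, w₂, heq⟩ := ih v hv
        exact ⟨bwd h w₁, w₂, by rw [heq]; rfl⟩

lemma split1 {S : Set V} :
    ∀ {a z : V} (w : DWalk G a z), Blocked S w →
      (∀ x, IsNonColliderOn w x → x ∉ S) →
      ∃ (c : V) (w₁ : DWalk G a c) (w₂ : DWalk G c z),
        w = w₁.append w₂ ∧ ¬ Blocked S w₁ ∧ IsColliderOn w c ∧ c ∉ S ∧
          ∀ d, Des G c d → d ∉ S := by
  intro a z w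
  induction w with
  | nil a => intro hb; simp only [Blocked] at hb
  | @fwd a b z h w ih =>
      cases w with
      | nil => intro hb; simp only [Blocked] at hb
      | fwd h' w' =>
          intro hb hnc
          simp only [Blocked] at hb
          have hbS : b ∉ S := hnc b (by simp only [IsNonColliderOn]; exact Or.inl trivial)
          have hb' : Blocked S (fwd h' w') := hb.resolve_left hbS
          obtain ⟨c, w₁, w₂, heq, hnb1, hcol, hcS, hcd⟩ :=
            ih hb' (fun x hx => hnc x (by simp only [IsNonColliderOn]; exact Or.inr hx))
          refine ⟨c, fwd h w₁, w₂, by rw [show (fwd h w₁).append w₂ = fwd h (w₁.append w₂) from rfl, ← heq], ?_, ?_, hcS, hcd⟩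
          · cases w₁ with
            | nil => intro hbb; simp only [Blocked] at hbb
            | fwd h₂ u₂ =>
                intro hbb
                simp only [Blocked] at hbb
                rcases hbb with hbb | hbb
                · exact hbS hbb
                · exact hnb1 hbb
            | bwd h₂ u₂ =>
                exfalso
                simp only [append] at heq
                injection heq
          · simp only [IsColliderOn]; exact hcol
      | bwd h' w' =>
          intro hb hnc
          simp only [Blocked] at hb
          by_cases hcl : b ∉ S ∧ ∀ d, Des G b d → d ∉ S
          · refine ⟨b, fwd h (nil b), bwd h' w', rfl, ?_, ?_, hcl.1, hcl.2⟩
            · intro hbb; simp only [Blocked] at hbb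
            · simp only [IsColliderOn]; exact Or.inl trivial
          · have hb' : Blocked S (bwd h' w') := hb.resolve_left hcl
            obtain ⟨c, w₁, w₂, heq, hnb1, hcol, hcS, hcd⟩ :=
              ih hb' (fun x hx => hnc x (by simp only [IsNonColliderOn]; exact hx))
            refine ⟨c, fwd h w₁, w₂, by rw [show (fwd h w₁).append w₂ = fwd h (w₁.append w₂) from rfl, ← heq], ?_, ?_, hcS, hcd⟩
            · cases w₁ with
              | nil => intro hbb; simp only [Blocked] at hbb
              | bwd h₂ u₂ =>
                  intro hbb
                  simp only [Blocked] at hbb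
                  rcases hbb with hbb | hbb
                  · exact hcl hbb
                  · exact hnb1 hbb
              | fwd h₂ u₂ =>
                  exfalso
                  simp only [append] at heq
                  injection heq
            · simp only [IsColliderOn]; exact Or.inr hcol
  | @bwd a b z h w ih =>
      cases w with
      | nil => intro hb; simp only [Blocked] at hb
      | fwd h' w' =>
          intro hb hnc
          simp only [Blocked] at hb
          have hbS : b ∉ S := hnc b (by simp only [IsNonColliderOn]; exact Or.inl trivial)
          have hb' : Blocked S (fwd h' w') := hb.resolve_left hbS
          obtain ⟨c, w₁, w₂, heq, hnb1, hcol, hcS, hcd⟩ :=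
            ih hb' (fun x hx => hnc x (by simp only [IsNonColliderOn]; exact Or.inr hx))
          refine ⟨c, bwd h w₁, w₂, by rw [show (bwd h w₁).append w₂ = bwd h (w₁.append w₂) from rfl, ← heq], ?_, ?_, hcS, hcd⟩
          · cases w₁ with
            | nil => intro hbb; simp only [Blocked] at hbb
            | fwd h₂ u₂ =>
                intro hbb
                simp only [Blocked] at hbb
                rcases hbb with hbb | hbb
                · exact hbS hbb
                · exact hnb1 hbb
            | bwd h₂ u₂ =>
                exfalso
                simp only [append] at heq
                injection heq
          · simp only [IsColliderOn]; exact hcol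
      | bwd h' w' =>
          intro hb hnc
          simp only [Blocked] at hb
          have hbS : b ∉ S := hnc b (by simp only [IsNonColliderOn]; exact Or.inl trivial)
          have hb' : Blocked S (bwd h' w') := hb.resolve_left hbS
          obtain ⟨c, w₁, w₂, heq, hnb1, hcol, hcS, hcd⟩ :=
            ih hb' (fun x hx => hnc x (by simp only [IsNonColliderOn]; exact Or.inr hx))
          refine ⟨c, bwd h w₁, w₂, by rw [show (bwd h w₁).append w₂ = bwd h (w₁.append w₂) from rfl, ← heq], ?_, ?_, hcS, hcd⟩
          · cases w₁ with
            | nil => intro hbb; simp only [Blocked] at hbb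
            | bwd h₂ u₂ =>
                intro hbb
                simp only [Blocked] at hbb
                rcases hbb with hbb | hbb
                · exact hbS hbb
                · exact hnb1 hbb
            | fwd h₂ u₂ =>
                exfalso
                simp only [append] at heq
                injection heq
          · simp only [IsColliderOn]; exact hcol

lemma combine (hacyc : Acyclic G) {S : Set V} :
    ∀ (n : ℕ) {y m z : V} (w₁ : DWalk G y m) (q : DWalk G m z),
      (support q).length ≤ n → AllFwd q → (support q).Nodup → (support w₁).Nodup →
      ¬ Blocked S w₁ → (∀ x ∈ support q, x ∉ S) →
      ∃ w' : DWalk G y z, w'.IsPath ∧ ¬ Blocked S w' := by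
  intro n
  induction n with
  | zero =>
      intro y m z w₁ q hlen _ _ _ _ _
      exfalso
      have h1 : 0 < (support q).length :=
        List.length_pos_iff.mpr (support_ne_nil q)
      omega
  | succ n ih =>
      intro y m z w₁ q hlen hf hqnd hwnd hnb hqS
      by_cases hdisj : ∀ x ∈ (support q).tail, x ∉ support w₁
      · refine ⟨w₁.append q, ?_, final_notBlocked w₁ q hf hqS hnb⟩
        show (support (w₁.append q)).Nodup
        rw [support_append]
        refine List.Nodup.append hwnd ?_ ?_
        · have h2 := hqnd
          rw [support_cons_tail q] at h2
          exact (List.nodup_cons.mp h2).2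
        · intro x hx hx2
          exact hdisj x hx2 hx
      · push_neg at hdisj
        obtain ⟨v, hvtail, hvw⟩ := hdisj
        have hvq : v ∈ support q := by
          rw [support_cons_tail q]; exact List.mem_cons_of_mem _ hvtail
        obtain ⟨qa, qb, hqeq⟩ := splitAt q v hvq
        obtain ⟨wa, wb, hweq⟩ := splitAt w₁ v hvw
        have hvm : v ≠ m := by
          intro hvm; subst hvm
          rw [support_cons_tail q] at hqnd
          exact (List.nodup_cons.mp hqnd).1 hvtail
        have hsupq : support q = support qa ++ (support qb).tail := by
          rw [hqeq, support_append]
        have hqa2 : 2 ≤ (support qa).length := by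
          cases qa with
          | nil => exact absurd rfl hvm
          | fwd h wq =>
              show 2 ≤ (_ :: support wq).length
              have := List.length_pos_iff.mpr (support_ne_nil wq)
              simp only [List.length_cons]
              omega
          | bwd h wq =>
              show 2 ≤ (_ :: support wq).length
              have := List.length_pos_iff.mpr (support_ne_nil wq)
              simp only [List.length_cons]
              omega
        have hlenq : (support qb).length ≤ n := by
          have h3 : (support qb).length = (support qb).tail.length + 1 := by
            rw [support_cons_tail qb]; simp
          have h4 : (support q).length = (support qa).length + (support qb).tail.length := by
            rw [hsupq]; simp
          omega
        have hfq : AllFwd qb := allFwd_append_right qa qb (hqeq ▸ hf)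
        have hqand : (support qa ++ (support qb).tail).Nodup := hsupq ▸ hqnd
        have hqbnd : (support qb).Nodup := by
          rw [support_cons_tail qb]
          rw [List.nodup_append] at hqand
          refine List.nodup_cons.mpr ⟨?_, hqand.2.1⟩
          intro hvtl
          exact hqand.2.2 _ (end_mem_support qa) _ hvtl rfl
        have hwand : (support wa).Nodup := by
          have h5 : (support wa ++ (support wb).tail).Nodup := by
            rw [← support_append, ← hweq]; exact hwnd
          exact (List.nodup_append.mp h5).1
        have hnba : ¬ Blocked S wa := fun hbb => hnb (hweq ▸ blocked_append_left wa wb hbb)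
        have hqbS : ∀ x ∈ support qb, x ∉ S := by
          intro x hx
          apply hqS
          rw [support_cons_tail qb] at hx
          rcases List.mem_cons.mp hx with rfl | hx
          · exact hvq
          · rw [hsupq]; exact List.mem_append_right _ hx
        exact ih wa qb hlenq hfq hqbnd hwand hnba hqbS

end DWalk

/-- Enlarging a conditioning set without opening back-door paths: if the set `S`
(representing `(U, X_{t+1}, V_{t+1}, Z)`) d-separates the potential-outcome node `y`
(representing `Y(d^L)`) from every treatment node in `Tset` (representing `{Y_{jt}}`), and the
enlarged set adds only `Vt` (each of whose members has its designated descendant `V_{t+1}`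
already in `S`) and `Tprev` (each of whose members is a parent of some treatment node), where
no variable in the enlarged set is a descendant of `y` or of any treatment node, then the
enlarged set also d-separates `y` from every treatment node. -/
theorem stmt16 {V : Type*} (G : V → V → Prop) (hacyc : Acyclic G)
    (y : V) (Tset : Set V) (hyT : y ∉ Tset)
    (S Vt Tprev : Set V)
    -- V_{t+1} ∈ Des(V_t): each added lagged covariate has a descendant already in S
    (hVt : ∀ v ∈ Vt, ∃ v' ∈ S, Des G v v')
    -- each Y_{j,t-1} is a parent of some treatment node Y_{jt}
    (hTprev : ∀ p ∈ Tprev, ∃ tr ∈ Tset, G p tr)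
    -- no variable in the enlarged set is a descendant of y or of any treatment node
    (hnoDes : ∀ v ∈ S ∪ Vt ∪ Tprev, ¬ Des G y v ∧ ∀ tr ∈ Tset, ¬ Des G tr v)
    -- the smaller set d-separates y from every treatment node
    (hsep : ∀ tr ∈ Tset, DSep G S y tr) :
    ∀ tr ∈ Tset, DSep G (S ∪ Vt ∪ Tprev) y tr := by
  intro tr htr w hw
  by_contra hnb
  have hb : Blocked S w := hsep tr htr w hw
  have hSS' : S ⊆ S ∪ Vt ∪ Tprev := fun x hx => Or.inl (Or.inl hx)
  have hnc : ∀ x, IsNonColliderOn w x → x ∉ S :=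
    fun x hx hxS => hnb (nc_block w hx (hSS' hxS))
  obtain ⟨c, w₁, w₂, heq, hnb1, hcol, hcS, hcd⟩ := split1 w hb hnc
  have hopen : ¬ (c ∉ (S ∪ Vt ∪ Tprev) ∧ ∀ d, Des G c d → d ∉ (S ∪ Vt ∪ Tprev)) :=
    fun hcl => hnb (c_block w hcol hcl.1 hcl.2)
  obtain ⟨e, hec, heS'⟩ : ∃ e, (e = c ∨ Des G c e) ∧ e ∈ S ∪ Vt ∪ Tprev := by
    by_cases h1 : c ∈ S ∪ Vt ∪ Tprev
    · exact ⟨c, Or.inl rfl, h1⟩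
    · push_neg at hopen
      obtain ⟨d, hd1, hd2⟩ := hopen h1
      exact ⟨d, Or.inr hd1, hd2⟩
  have heS : e ∉ S := by
    rcases hec with rfl | hdes
    · exact hcS
    · exact hcd e hdes
  have heVt : e ∉ Vt := by
    intro hev
    obtain ⟨v', hv'S, hdes'⟩ := hVt e hev
    have hdcv : Des G c v' := by
      rcases hec with rfl | hdes
      · exact hdes'
      · exact Relation.TransGen.trans hdes hdes'
    exact hcd v' hdcv hv'S
  have heT : e ∈ Tprev := by
    rcases heS' with (h1 | h1) | h1
    · exact absurd h1 heS
    · exact absurd h1 heVt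
    · exact h1
  obtain ⟨tr', htr', hedge⟩ := hTprev e heT
  obtain ⟨q0, hq0f⟩ : ∃ q0 : DWalk G c tr', AllFwd q0 := by
    rcases hec with rfl | hdes
    · exact ⟨DWalk.fwd hedge (DWalk.nil _), trivial⟩
    · obtain ⟨qe, hqe⟩ := ofDes hdes
      exact ⟨qe.append (DWalk.fwd hedge (DWalk.nil _)), allFwd_append hqe trivial⟩
  have hq0p : (support q0).Nodup := allFwd_isPath hacyc q0 hq0f
  have hq0S : ∀ x ∈ support q0, x ∉ S := by
    intro x hx
    rcases mem_support_allFwd q0 hq0f x hx with rfl | hd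
    · exact hcS
    · exact hcd x hd
  have hw1nd : (support w₁).Nodup := by
    have h5 : (support (w₁.append w₂)).Nodup := heq ▸ hw
    rw [support_append] at h5
    exact (List.nodup_append.mp h5).1
  obtain ⟨w', hp', hnb'⟩ :=
    combine hacyc (support q0).length w₁ q0 le_rfl hq0f hq0p hw1nd hnb1 hq0S
  exact hnb' (hsep tr' htr' w' hp')
end
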